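/- arXiv:math/0212353 — 5 statements merged into one kernel-verified Lean document; each statement's English description precedes it below -/
import Mathlib

section
/- A cut semimetric δ_S lies on the hyperplane {d : H(b)·d = 0} (for b ∈ ℤ^{n+1} with ∑ b_i = 1) if and only if b(S) = 0 or b(S) = 1. -/
/-- Cut semimetric: `(δ_S)_{ij} = 1` iff `|S ∩ {i,j}| = 1`. -/
def cutSemimetric {n : ℕ} (S : Finset (Fin (n+1))) (i j : Fin (n+1)) : ℝ :=
  if (i ∈ S) ≠ (j ∈ S) then 1 else 0

lemma swap_lemma {n : ℕ} (F : Fin (n+1) → Fin (n+1) → ℝ) :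
    ∑ i, ∑ j ∈ Finset.Iio i, F i j = ∑ i, ∑ j ∈ Finset.Ioi i, F j i := by
  rw [Finset.sum_sigma', Finset.sum_sigma']
  refine Finset.sum_nbij' (fun x => ⟨x.2, x.1⟩) (fun x => ⟨x.2, x.1⟩) ?_ ?_ ?_ ?_ ?_ <;>
    simp [Finset.mem_sigma]

lemma cut_symm {n : ℕ} (S : Finset (Fin (n+1))) (i j : Fin (n+1)) :
    cutSemimetric S i j = cutSemimetric S j i := by
  rcases em (i ∈ S) with h1|h1 <;> rcases em (j ∈ S) with h2|h2 <;>
    simp [cutSemimetric, h1, h2]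

lemma key_eq {n : ℕ} (S : Finset (Fin (n+1))) (b : Fin (n+1) → ℤ) (hb : ∑ i, b i = 1) :
    (∑ i, ∑ j ∈ Finset.univ.filter (fun j => i < j),
        (b i : ℝ) * (b j : ℝ) * cutSemimetric S i j)
      = (↑(∑ a ∈ S, b a) : ℝ) * (1 - ↑(∑ a ∈ S, b a)) := by
  classical
  set F : Fin (n+1) → Fin (n+1) → ℝ :=
    fun i j => (b i : ℝ) * (b j : ℝ) * cutSemimetric S i j with hF
  set B : ℝ := (↑(∑ a ∈ S, b a) : ℝ) with hB
  set C : ℝ := (↑(∑ a ∈ Sᶜ, b a) : ℝ) with hC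
  have hBC : B + C = 1 := by
    rw [hB, hC, ← Int.cast_add, Finset.sum_add_sum_compl, hb, Int.cast_one]
  have hdiag : ∀ i, F i i = 0 := by intro i; simp [hF, cutSemimetric]
  have hsym : ∀ i j, F i j = F j i := by
    intro i j; simp only [hF, cut_symm S i j]; ring
  have hfilterIoi : ∀ i : Fin (n+1),
      Finset.univ.filter (fun j => i < j) = Finset.Ioi i := by
    intro i; ext j; simp
  have hfilterIic : ∀ i : Fin (n+1),
      Finset.univ.filter (fun j => ¬ i < j) = Finset.Iic i := by
    intro i; ext j; simp [not_lt]
  have hrow : ∀ i, ∑ j, F i j = if i ∈ S then (b i : ℝ) * C else (b i : ℝ) * B := by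
    intro i
    rw [← Finset.sum_add_sum_compl S (F i)]
    by_cases hi : i ∈ S
    · have h1 : ∑ j ∈ S, F i j = 0 := by
        apply Finset.sum_eq_zero; intro j hj; simp [hF, cutSemimetric, hi, hj]
      have h2 : ∑ j ∈ Sᶜ, F i j = (b i : ℝ) * C := by
        rw [hC, Int.cast_sum, Finset.mul_sum]
        apply Finset.sum_congr rfl; intro j hj
        simp only [Finset.mem_compl] at hj
        simp [hF, cutSemimetric, hi, hj]
      simp [h1, h2, hi]
    · have h1 : ∑ j ∈ S, F i j = (b i : ℝ) * B := by
        rw [hB, Int.cast_sum, Finset.mul_sum]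
        apply Finset.sum_congr rfl; intro j hj
        simp [hF, cutSemimetric, hi, hj]
      have h2 : ∑ j ∈ Sᶜ, F i j = 0 := by
        apply Finset.sum_eq_zero; intro j hj
        simp only [Finset.mem_compl] at hj
        simp [hF, cutSemimetric, hi, hj]
      simp [h1, h2, hi]
  have hT : ∑ i, ∑ j, F i j = 2 * (B * C) := by
    calc ∑ i, ∑ j, F i j
        = ∑ i, (if i ∈ S then (b i : ℝ) * C else (b i : ℝ) * B) := by
          exact Finset.sum_congr rfl fun i _ => hrow i
      _ = ∑ i ∈ S, (b i : ℝ) * C + ∑ i ∈ Sᶜ, (b i : ℝ) * B := by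
          rw [← Finset.sum_add_sum_compl S]
          congr 1
          · exact Finset.sum_congr rfl fun i hi => by simp [hi]
          · refine Finset.sum_congr rfl fun i hi => ?_
            simp only [Finset.mem_compl] at hi; simp [hi]
      _ = B * C + C * B := by
          rw [← Finset.sum_mul, ← Finset.sum_mul, ← hB.symm, ← hC.symm]
          push_cast [hB, hC]; ring
      _ = 2 * (B * C) := by ring
  have hhalf : ∑ i, ∑ j, F i j
      = 2 * ∑ i, ∑ j ∈ Finset.univ.filter (fun j => i < j), F i j := by
    have hsplit : ∀ i : Fin (n+1), ∑ j, F i j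
        = (∑ j ∈ Finset.univ.filter (fun j => i < j), F i j)
          + ∑ j ∈ Finset.Iic i, F i j := by
      intro i
      rw [← Finset.sum_filter_add_sum_filter_not Finset.univ (fun j => i < j) (F i),
        hfilterIic]
    have hIic : ∀ i : Fin (n+1), ∑ j ∈ Finset.Iic i, F i j = ∑ j ∈ Finset.Iio i, F i j := by
      intro i
      rw [Finset.Iic_eq_cons_Iio, Finset.sum_cons, hdiag, zero_add]
    have hsw : ∑ i, ∑ j ∈ Finset.Iio i, F i j
        = ∑ i, ∑ j ∈ Finset.univ.filter (fun j => i < j), F i j := by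
      rw [swap_lemma]
      refine Finset.sum_congr rfl fun i _ => ?_
      rw [hfilterIoi]
      exact Finset.sum_congr rfl fun j _ => (hsym j i)
    calc ∑ i, ∑ j, F i j
        = ∑ i, ((∑ j ∈ Finset.univ.filter (fun j => i < j), F i j)
            + ∑ j ∈ Finset.Iio i, F i j) := by
          exact Finset.sum_congr rfl fun i _ => by rw [hsplit i, hIic i]
      _ = _ := by rw [Finset.sum_add_distrib, hsw]; ring
  have := hhalf.symm.trans hT
  have h2 : ∑ i, ∑ j ∈ Finset.univ.filter (fun j => i < j), F i j = B * C := by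
    linarith
  rw [hF] at h2
  rw [h2]
  have : C = 1 - B := by linarith
  rw [this]

/-- `δ_S` lies on the hyperplane `H(b)·d = 0` iff `b(S) = 0` or `b(S) = 1`. -/
theorem cut_on_hypermetric_hyperplane_iff {n : ℕ} (S : Finset (Fin (n+1)))
    (b : Fin (n+1) → ℤ) (hb : ∑ i, b i = 1) :
    (∑ i, ∑ j ∈ Finset.univ.filter (fun j => i < j),
        (b i : ℝ) * (b j : ℝ) * cutSemimetric S i j = 0)
      ↔ (∑ a ∈ S, b a = 0 ∨ ∑ a ∈ S, b a = 1) := by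

  rw [key_eq S b hb]
  rw [mul_eq_zero]
  constructor
  · rintro (h | h)
    · left; exact_mod_cast h
    · right; have : (↑(∑ a ∈ S, b a) : ℝ) = 1 := by linarith
      exact_mod_cast this
  · rintro (h | h)
    · left; exact_mod_cast h
    · right; rw [h]; norm_num
end

section
/- Let v_0,...,v_n ∈ ℝ^n and define d(i,j) = ‖v_i − v_j‖². Then the family v_0,...,v_n is affinely independent (i.e., v_1−v_0,...,v_n−v_0 are linearly independent) if and only if det[d(0,i) + d(0,j) − d(i,j)]_{1≤i,j≤n} ≠ 0. -/
open scoped RealInnerProductSpace Matrix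

/-!
Writing `w i = v i - v 0`, the polarization identity turns `d(0,i) + d(0,j) - d(i,j)` into
`2 ⟪w i, w j⟫`, so the matrix is twice the Gram matrix of the `w i`. A Gram matrix is positive
semidefinite, and it is positive definite, equivalently nonsingular, exactly when the vectors are
linearly independent.
-/

section

variable {F : Type*} [NormedAddCommGroup F] [InnerProductSpace ℝ F]

theorem norm_sq_add_norm_sq_sub_norm_sub_sq_real (x y : F) :
    ‖x‖ ^ 2 + ‖y‖ ^ 2 - ‖x - y‖ ^ 2 = 2 * ⟪x, y⟫ := by
  rw [norm_sub_sq_real]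
  ring

theorem of_norm_sub_sq_eq_two_smul_gram {ι : Type*} (o : F) (p : ι → F) :
    Matrix.of (fun i j => ‖o - p i‖ ^ 2 + ‖o - p j‖ ^ 2 - ‖p i - p j‖ ^ 2)
      = (2 : ℝ) • Matrix.gram ℝ (fun i => p i - o) := by
  ext i j
  rw [Matrix.of_apply, Matrix.smul_apply, Matrix.gram_apply, smul_eq_mul, norm_sub_rev o,
    norm_sub_rev o, ← sub_sub_sub_cancel_right (p i) (p j) o,
    norm_sq_add_norm_sq_sub_norm_sub_sq_real]

theorem linearIndependent_sub_iff_det_ne_zero {ι : Type*} [Fintype ι] [DecidableEq ι]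
    (o : F) (p : ι → F) :
    LinearIndependent ℝ (fun i => p i - o) ↔
      (Matrix.of fun i j => ‖o - p i‖ ^ 2 + ‖o - p j‖ ^ 2 - ‖p i - p j‖ ^ 2).det ≠ 0 := by
  rw [of_norm_sub_sq_eq_two_smul_gram, Matrix.det_smul, mul_ne_zero_iff,
    Matrix.det_gram_ne_zero_iff_linearIndependent]
  simp

end

/-- The points `v_0,…,v_n` are affinely independent (i.e. the differences
`v_i − v_0` are linearly independent) iff the Cayley–Menger-type determinant
`det[d(0,i)+d(0,j)−d(i,j)]_{1≤i,j≤n}` is nonzero, where `d(i,j) = ‖v_i − v_j‖²`. -/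
theorem affineIndependent_iff_det_ne_zero {n : ℕ}
    (v : Fin (n+1) → EuclideanSpace ℝ (Fin n)) :
    LinearIndependent ℝ (fun i : Fin n => v i.succ - v 0) ↔
      Matrix.det (fun i j : Fin n =>
        ‖v 0 - v i.succ‖^2 + ‖v 0 - v j.succ‖^2 - ‖v i.succ - v j.succ‖^2) ≠ 0 :=
  linearIndependent_sub_iff_det_ne_zero (v 0) (fun i : Fin n => v i.succ)
end

section
/- Let v_0,...,v_m lie on a sphere S(c,r) in ℝ^n, and suppose every point of a lattice L containing all v_i satisfies ‖v − c‖ ≥ r (S is an empty sphere of L). Then the distance vector d(i,j) = ‖v_i − v_j‖² is hypermetric: for all b ∈ ℤ^{m+1} with ∑ b_i = 1, ∑_{i<j} b_i b_j d(i,j) ≤ 0. -/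
/-!
For integer weights `b` with `∑ bᵢ = 1`, the point `w = ∑ bᵢ vᵢ` lies in `L`, and the weighted
Lagrange identity `∑_{i<j} bᵢ bⱼ ‖vᵢ - vⱼ‖² = ∑ bᵢ ‖vᵢ - c‖² - ‖w - c‖²` turns the hypermetric sum
into `r² - ‖w - c‖²`, which is nonpositive because the sphere is empty.
-/

open Finset

theorem Finset.sum_sum_eq_two_mul_sum_sum_lt {ι R : Type*} [Fintype ι] [LinearOrder ι]
    [NonAssocSemiring R] (F : ι → ι → R) (hsymm : ∀ i j, F i j = F j i) (hdiag : ∀ i, F i i = 0) :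
    ∑ i, ∑ j, F i j = 2 * ∑ i, ∑ j ∈ univ.filter (i < ·), F i j := by
  have hsplit : ∀ i j, F i j = (if i < j then F i j else 0) + (if j < i then F j i else 0) := by
    intro i j
    rcases lt_trichotomy i j with h | rfl | h
    · simp [h, h.not_gt]
    · simp [hdiag]
    · simp [h, h.not_gt, hsymm i j]
  simp_rw [sum_filter, two_mul]
  conv_lhs => enter [2, i, 2, j]; rw [hsplit i j]
  rw [sum_congr rfl fun i _ => sum_add_distrib, sum_add_distrib,
    sum_comm (f := fun i j => if j < i then F j i else 0)]

theorem sum_sum_mul_mul_norm_sub_sq {ι E : Type*} [Fintype ι] [NormedAddCommGroup E]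
    [InnerProductSpace ℝ E] (B : ι → ℝ) (u : ι → E) :
    ∑ i, ∑ j, B i * B j * ‖u i - u j‖ ^ 2
      = 2 * ((∑ i, B i) * ∑ i, B i * ‖u i‖ ^ 2 - ‖∑ i, B i • u i‖ ^ 2) := by
  have hnorm : ‖∑ i, B i • u i‖ ^ 2 = ∑ i, ∑ j, B i * B j * inner ℝ (u i) (u j) := by
    rw [← real_inner_self_eq_norm_sq, sum_inner]
    simp only [inner_sum, real_inner_smul_left, real_inner_smul_right]
    exact sum_congr rfl fun i _ => sum_congr rfl fun j _ => by ring
  have hexpand : ∀ i j, B i * B j * ‖u i - u j‖ ^ 2 = B j * (B i * ‖u i‖ ^ 2)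
      + B i * (B j * ‖u j‖ ^ 2) - 2 * (B i * B j * inner ℝ (u i) (u j)) := by
    intro i j; rw [norm_sub_sq_real]; ring
  simp only [hexpand, sum_sub_distrib, sum_add_distrib, ← mul_sum, ← sum_mul, hnorm]
  ring

theorem sum_sum_lt_mul_mul_norm_sub_sq_of_sum_eq_one {ι E : Type*} [Fintype ι] [LinearOrder ι]
    [NormedAddCommGroup E] [InnerProductSpace ℝ E] (B : ι → ℝ) (hB : ∑ i, B i = 1)
    (v : ι → E) (c : E) :
    ∑ i, ∑ j ∈ univ.filter (i < ·), B i * B j * ‖v i - v j‖ ^ 2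
      = ∑ i, B i * ‖v i - c‖ ^ 2 - ‖∑ i, B i • v i - c‖ ^ 2 := by
  have hcenter : ∑ i, B i • v i - c = ∑ i, B i • (v i - c) := by
    simp only [smul_sub, sum_sub_distrib, ← sum_smul, hB, one_smul]
  have hfull := sum_sum_mul_mul_norm_sub_sq B (fun i => v i - c)
  simp only [sub_sub_sub_cancel_right, hB, one_mul, ← hcenter] at hfull
  rw [sum_sum_eq_two_mul_sum_sum_lt _ (fun i j => by rw [norm_sub_rev]; ring) (by simp)] at hfull
  linarith

theorem squared_distances_on_empty_sphere_hypermetric_general {n m : ℕ}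
    (L : AddSubgroup (EuclideanSpace ℝ (Fin n)))
    (c : EuclideanSpace ℝ (Fin n)) (r : ℝ)
    (hempty : ∀ x ∈ L, r ≤ ‖x - c‖)
    (v : Fin (m+1) → EuclideanSpace ℝ (Fin n))
    (hvL : ∀ i, v i ∈ L) (hvS : ∀ i, ‖v i - c‖ = r)
    (b : Fin (m+1) → ℤ) (hb : ∑ i, b i = 1) :
    ∑ i, ∑ j ∈ Finset.univ.filter (fun j => i < j),
      (b i : ℝ) * (b j : ℝ) * ‖v i - v j‖^2 ≤ 0 := by
  have hr : 0 ≤ r := hvS 0 ▸ norm_nonneg _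
  have hB : ∑ i, (b i : ℝ) = 1 := by exact_mod_cast hb
  have hw : ∑ i, (b i : ℝ) • v i ∈ L :=
    L.sum_mem fun i _ => Int.cast_smul_eq_zsmul ℝ (b i) (v i) ▸ L.zsmul_mem (hvL i) (b i)
  rw [sum_sum_lt_mul_mul_norm_sub_sq_of_sum_eq_one _ hB v c]
  simp only [hvS, ← sum_mul, hB, one_mul, sub_nonpos]
  exact pow_le_pow_left₀ hr (hempty _ hw) 2

/-- If `v_0,…,v_m` lie on an empty sphere `S(c,r)` of a lattice `L` (every lattice
point is at distance at least `r` from `c`), then the squared-distance vector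
`d(i,j) = ‖v_i − v_j‖²` is hypermetric. -/
theorem squared_distances_on_empty_sphere_hypermetric {n m : ℕ}
    (L : AddSubgroup (EuclideanSpace ℝ (Fin n)))
    (c : EuclideanSpace ℝ (Fin n)) (r : ℝ) (hr : 0 < r)
    (hempty : ∀ x ∈ L, r ≤ ‖x - c‖)
    (v : Fin (m+1) → EuclideanSpace ℝ (Fin n))
    (hvL : ∀ i, v i ∈ L) (hvS : ∀ i, ‖v i - c‖ = r)
    (b : Fin (m+1) → ℤ) (hb : ∑ i, b i = 1) :
    ∑ i, ∑ j ∈ Finset.univ.filter (fun j => i < j),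
      (b i : ℝ) * (b j : ℝ) * ‖v i - v j‖^2 ≤ 0 :=
  squared_distances_on_empty_sphere_hypermetric_general L c r hempty v hvL hvS b hb
end

section
/- For n = 3 (cone HYP_3 of triangle squared-distance vectors): the hypermetric condition H(b)·d ≤ 0 for all b ∈ ℤ³ with ∑ b_i = 1 is equivalent to the three inequalities d_{12} ≤ d_{01} + d_{02}, d_{02} ≤ d_{01} + d_{12}, d_{01} ≤ d_{02} + d_{12} for nonnegative d. -/
lemma int_mul_one_sub_nonpos (n : ℤ) : (n : ℝ) * (1 - (n : ℝ)) ≤ 0 := by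
  rcases le_or_gt n 0 with h | h
  · have h1 : (n : ℝ) ≤ 0 := by exact_mod_cast h
    have h2 : (0 : ℝ) ≤ 1 - (n : ℝ) := by linarith
    exact mul_nonpos_of_nonpos_of_nonneg h1 h2
  · have h1 : (1 : ℝ) ≤ (n : ℝ) := by exact_mod_cast h
    have h2 : (0 : ℝ) ≤ (n : ℝ) := by linarith
    exact mul_nonpos_of_nonneg_of_nonpos h2 (by linarith)

/-- For nonnegative `d = (d₀₁, d₀₂, d₁₂)`, the hypermetric condition
`H(b)·d ≤ 0` for all `b ∈ ℤ³` with `∑ b = 1` is equivalent to the three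
triangle inequalities. -/
theorem HYP3_iff_triangle_inequalities (d01 d02 d12 : ℝ)
    (h01 : 0 ≤ d01) (h02 : 0 ≤ d02) (h12 : 0 ≤ d12) :
    (∀ b : Fin 3 → ℤ, (∑ i, b i) = 1 →
        (b 0 : ℝ) * (b 1 : ℝ) * d01 + (b 0 : ℝ) * (b 2 : ℝ) * d02
          + (b 1 : ℝ) * (b 2 : ℝ) * d12 ≤ 0)
      ↔ (d12 ≤ d01 + d02 ∧ d02 ≤ d01 + d12 ∧ d01 ≤ d02 + d12) := by
  constructor
  · intro h
    have t1 := h ![-1, 1, 1] (by decide)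
    have t2 := h ![1, -1, 1] (by decide)
    have t3 := h ![1, 1, -1] (by decide)
    simp [Matrix.cons_val_zero, Matrix.cons_val_one] at t1 t2 t3
    refine ⟨by linarith, by linarith, by linarith⟩
  · rintro ⟨T1, T2, T3⟩ b hs
    have hsR : (b 0 : ℝ) + (b 1 : ℝ) + (b 2 : ℝ) = 1 := by
      have : b 0 + b 1 + b 2 = 1 := by
        simpa [Fin.sum_univ_three] using hs
      exact_mod_cast this
    have q0 := int_mul_one_sub_nonpos (b 0)
    have q1 := int_mul_one_sub_nonpos (b 1)
    have q2 := int_mul_one_sub_nonpos (b 2)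
    set x := (d01 + d02 - d12) / 2 with hx
    set y := (d01 + d12 - d02) / 2 with hy
    set z := (d02 + d12 - d01) / 2 with hz
    have hx0 : 0 ≤ x := by simp [hx]; linarith
    have hy0 : 0 ≤ y := by simp [hy]; linarith
    have hz0 : 0 ≤ z := by simp [hz]; linarith
    have key : (b 0 : ℝ) * (b 1 : ℝ) * d01 + (b 0 : ℝ) * (b 2 : ℝ) * d02
        + (b 1 : ℝ) * (b 2 : ℝ) * d12
        = x * ((b 0 : ℝ) * (1 - (b 0 : ℝ)))
          + y * ((b 1 : ℝ) * (1 - (b 1 : ℝ)))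
          + z * ((b 2 : ℝ) * (1 - (b 2 : ℝ))) := by
      have e0 : (1 : ℝ) - (b 0 : ℝ) = (b 1 : ℝ) + (b 2 : ℝ) := by linarith
      have e1 : (1 : ℝ) - (b 1 : ℝ) = (b 0 : ℝ) + (b 2 : ℝ) := by linarith
      have e2 : (1 : ℝ) - (b 2 : ℝ) = (b 0 : ℝ) + (b 1 : ℝ) := by linarith
      rw [e0, e1, e2, hx, hy, hz]; ring
    rw [key]
    have := mul_nonpos_of_nonneg_of_nonpos hx0 q0
    have := mul_nonpos_of_nonneg_of_nonpos hy0 q1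
    have := mul_nonpos_of_nonneg_of_nonpos hz0 q2
    linarith
end

section
/- Let D_n = {x ∈ ℤ^n : ∑ x_i even} and c = (1/2,...,1/2). For n ≥ 4, every x ∈ D_n satisfies ‖x − c‖ ≥ √n/2, with equality exactly when x ∈ {0,1}^n and ∑ x_i is even, i.e. D_n ∩ S(c, √n/2) = hγ_n = {x ∈ {0,1}^n : ∑ x_i even}. -/
/-- The half-cube as a Delaunay polytope of `D_n` (`n ≥ 4`): every
`x ∈ D_n = {x ∈ ℤⁿ : ∑ x_i even}` satisfies `‖x − c‖ ≥ √n/2`, where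
`c = (1/2,…,1/2)`, with equality exactly when `x ∈ {0,1}ⁿ` (and `∑ x_i` even,
which holds by hypothesis). -/
theorem halfcube_empty_sphere (n : ℕ) (hn : 4 ≤ n) (x : Fin n → ℤ)
    (hx : Even (∑ i, x i)) :
    Real.sqrt n / 2
      ≤ ‖((EuclideanSpace.equiv (Fin n) ℝ).symm (fun i => (x i : ℝ))
            : EuclideanSpace ℝ (Fin n))
          - (EuclideanSpace.equiv (Fin n) ℝ).symm (fun _ => (1:ℝ)/2)‖ ∧
    (‖((EuclideanSpace.equiv (Fin n) ℝ).symm (fun i => (x i : ℝ))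
            : EuclideanSpace ℝ (Fin n))
          - (EuclideanSpace.equiv (Fin n) ℝ).symm (fun _ => (1:ℝ)/2)‖
        = Real.sqrt n / 2
      ↔ ∀ i, x i = 0 ∨ x i = 1) := by
  have hnorm : ‖((EuclideanSpace.equiv (Fin n) ℝ).symm (fun i => (x i : ℝ))
            : EuclideanSpace ℝ (Fin n))
          - (EuclideanSpace.equiv (Fin n) ℝ).symm (fun _ => (1:ℝ)/2)‖
      = Real.sqrt (∑ i, ((x i : ℝ) - 1/2)^2) := by
    rw [EuclideanSpace.norm_eq]
    congr 1
    refine Finset.sum_congr rfl fun i _ => ?_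
    rw [show ‖(((EuclideanSpace.equiv (Fin n) ℝ).symm (fun i => (x i : ℝ))
            : EuclideanSpace ℝ (Fin n))
          - (EuclideanSpace.equiv (Fin n) ℝ).symm (fun _ => (1:ℝ)/2)) i‖
        = |(x i : ℝ) - 1/2| from rfl, sq_abs]
  have hterm : ∀ i : Fin n, (1:ℝ)/4 ≤ ((x i : ℝ) - 1/2)^2 := by
    intro i
    have hnn : (0:ℝ) ≤ (x i : ℝ) * ((x i : ℝ) - 1) := by
      rcases le_or_gt (x i) 0 with h0 | h0
      · have : (x i : ℝ) ≤ 0 := by exact_mod_cast h0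
        nlinarith
      · have : (1:ℝ) ≤ (x i : ℝ) := by exact_mod_cast h0
        nlinarith
    nlinarith
  have hsum : (n:ℝ)/4 ≤ ∑ i, ((x i : ℝ) - 1/2)^2 := by
    calc (n:ℝ)/4 = ∑ _i : Fin n, (1:ℝ)/4 := by simp; ring
    _ ≤ _ := Finset.sum_le_sum fun i _ => hterm i
  have hhalf : Real.sqrt n / 2 = Real.sqrt ((n:ℝ)/4) := by
    rw [Real.sqrt_div (by positivity),
      show Real.sqrt 4 = 2 by
        rw [show (4:ℝ) = 2^2 by norm_num, Real.sqrt_sq]; norm_num]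
  constructor
  · rw [hnorm, hhalf]
    exact Real.sqrt_le_sqrt hsum
  · rw [hnorm, hhalf]
    rw [Real.sqrt_inj (by positivity) (by positivity)]
    constructor
    · intro h
      have hall := (Finset.sum_eq_sum_iff_of_le (fun i _ => hterm i)).mp
        (by rw [h]; simp; ring)
      intro i
      have hi := (hall i (Finset.mem_univ i)).symm
      have : (x i : ℝ) * ((x i : ℝ) - 1) = 0 := by nlinarith
      rcases mul_eq_zero.mp this with h0 | h0
      · left; exact_mod_cast h0
      · right
        have : (x i : ℝ) = 1 := by linarith
        exact_mod_cast this
    · intro h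
      have : ∀ i ∈ Finset.univ, ((x i : ℝ) - 1/2)^2 = 1/4 := by
        intro i _
        rcases h i with h0 | h0 <;> rw [h0] <;> norm_num
      rw [Finset.sum_congr rfl this]
      simp; ring
end
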